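/- Let $p_X$ be a compactly supported probability measure on $\mathbb{R}^d$, $\omega > 0$, $p_\omega = p_X * \mathcal{N}(0,\omega^2 I)$, $f^\star_\omega(y) = \mathbb{E}_{q_\omega}[X|Y=y]$ the posterior mean, and $C_\omega(y) = \mathrm{Cov}_{q_\omega}(X|Y=y)$. Then the gradient of the trace of the posterior covariance satisfies $\omega^2\,\nabla_y \operatorname{tr} C_\omega(y) = W_\omega(y) - 2\,C_\omega(y)\,(f^\star_\omega(y) - y)$, where $W_\omega(y) = \mathrm{Cov}_{q_\omega}(X, \|X - y\|^2 \mid Y = y)$. -/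

import Mathlib

open MeasureTheory Real

/-- Posterior weight `e^{-‖x-y‖²/(2ω²)}`. -/
noncomputable def wgt {d : ℕ} (ω : ℝ) (y x : EuclideanSpace ℝ (Fin d)) : ℝ :=
  Real.exp (-‖x - y‖ ^ 2 / (2 * ω ^ 2))

/-- Posterior normalizing constant. -/
noncomputable def postZ {d : ℕ} (pX : Measure (EuclideanSpace ℝ (Fin d))) (ω : ℝ)
    (y : EuclideanSpace ℝ (Fin d)) : ℝ := ∫ x, wgt ω y x ∂pX

/-- Posterior mean `f⋆_ω(y) = E_{q_ω}[X | Y = y]`. -/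
noncomputable def postMean {d : ℕ} (pX : Measure (EuclideanSpace ℝ (Fin d))) (ω : ℝ)
    (y : EuclideanSpace ℝ (Fin d)) : EuclideanSpace ℝ (Fin d) :=
  (postZ pX ω y)⁻¹ • ∫ x, wgt ω y x • x ∂pX

/-- Trace of the posterior covariance `tr C_ω(y) = E_{q_ω}[‖X - f⋆_ω(y)‖² | Y = y]`. -/
noncomputable def postTrCov {d : ℕ} (pX : Measure (EuclideanSpace ℝ (Fin d))) (ω : ℝ)
    (y : EuclideanSpace ℝ (Fin d)) : ℝ :=
  (postZ pX ω y)⁻¹ * ∫ x, wgt ω y x * ‖x - postMean pX ω y‖ ^ 2 ∂pX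

/-- Posterior covariance `C_ω(y)` applied to a vector `v`. -/
noncomputable def postCovApply {d : ℕ} (pX : Measure (EuclideanSpace ℝ (Fin d))) (ω : ℝ)
    (y v : EuclideanSpace ℝ (Fin d)) : EuclideanSpace ℝ (Fin d) :=
  (postZ pX ω y)⁻¹ •
    ∫ x, (wgt ω y x * (inner ℝ (x - postMean pX ω y) v : ℝ)) • (x - postMean pX ω y) ∂pX

/-- Cross-covariance vector `W_ω(y) = Cov_{q_ω}(X, ‖X - y‖² | Y = y)`. -/
noncomputable def postCrossCov {d : ℕ} (pX : Measure (EuclideanSpace ℝ (Fin d))) (ω : ℝ)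
    (y : EuclideanSpace ℝ (Fin d)) : EuclideanSpace ℝ (Fin d) :=
  ((postZ pX ω y)⁻¹ • ∫ x, (wgt ω y x * ‖x - y‖ ^ 2) • x ∂pX)
    - ((postZ pX ω y)⁻¹ * ∫ x, wgt ω y x * ‖x - y‖ ^ 2 ∂pX) • postMean pX ω y

/-!
Write `q` for the posterior (the tilt of `pX` by `-‖x - y‖² / (2ω²)`) and `m` for its mean.
Differentiating under the integral sign, which compact support justifies, gives
`ω² ∂ᵥ E_q[g(X)] = E_q[⟪X - m, v⟫ g(X)]` for continuous `g`. Applied to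
`tr C = E_q ‖X‖² - ‖m‖²`, this yields `ω² ∇ tr C = E_q[‖X - m‖² (X - m)]`. The right-hand side is
the same third central moment: `‖x - y‖² - 2⟪x - m, m - y⟫ = ‖x - m‖² + ‖m - y‖²`, and the
constant `‖m - y‖²` drops out because `E_q[X - m] = 0`.
-/

open RealInnerProductSpace

theorem Continuous.integrable_of_measure_compl_eq_zero {X F : Type*} [TopologicalSpace X]
    [T2Space X] [MeasurableSpace X] [OpensMeasurableSpace X] [NormedAddCommGroup F]
    {μ : Measure X} [IsFiniteMeasure μ] {K : Set X} (hK : IsCompact K) (hK0 : μ Kᶜ = 0)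
    {f : X → F} (hf : Continuous f) : Integrable f μ := by
  rw [← Measure.restrict_eq_self_of_ae_mem (ae_iff.2 hK0)]
  exact hf.continuousOn.integrableOn_compact hK

@[fun_prop]
theorem Continuous.smulRight {X E F : Type*} [TopologicalSpace X] [NormedAddCommGroup E]
    [NormedSpace ℝ E] [NormedAddCommGroup F] [NormedSpace ℝ F] {f : X → E →L[ℝ] ℝ} {g : X → F}
    (hf : Continuous f) (hg : Continuous g) : Continuous fun x => (f x).smulRight (g x) :=
  isBoundedBilinearMap_smulRight.continuous.comp (hf.prodMk hg)

section Centering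

variable {E : Type*} [NormedAddCommGroup E] [InnerProductSpace ℝ E] [CompleteSpace E]
  [MeasurableSpace E] {μ : Measure E} [IsProbabilityMeasure μ]

theorem integral_add_const_smul_sub_of_integral_eq (hid : Integrable (fun x => x) μ) {m : E}
    (hm : ∫ x, x ∂μ = m) {g : E → ℝ} (hg : Integrable (fun x => g x • (x - m)) μ) (c : ℝ) :
    ∫ x, (g x + c) • (x - m) ∂μ = ∫ x, g x • (x - m) ∂μ := by
  have hc : Integrable (fun x => c • (x - m)) μ := (hid.sub (integrable_const m)).smul c
  have hcentered : ∫ x, (x - m) ∂μ = 0 := by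
    rw [integral_sub hid (integrable_const m), integral_const, probReal_univ, one_smul, hm,
      sub_self]
  simp_rw [add_smul]
  rw [integral_add hg hc, integral_smul, hcentered, smul_zero, add_zero]

theorem integral_norm_sub_integral_id_sq (hid : Integrable (fun x => x) μ)
    (hsq : Integrable (fun x => ‖x‖ ^ 2) μ) :
    ∫ x, ‖x - ∫ x, x ∂μ‖ ^ 2 ∂μ = ∫ x, ‖x‖ ^ 2 ∂μ - ‖∫ x, x ∂μ‖ ^ 2 := by
  set m := ∫ x, x ∂μ
  have hinner : ∫ x, ⟪x, m⟫ ∂μ = ‖m‖ ^ 2 := by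
    simp_rw [real_inner_comm m]
    rw [integral_inner hid, real_inner_self_eq_norm_sq]
  have h2 : Integrable (fun x => 2 * ⟪x, m⟫) μ := (hid.inner_const m).const_mul 2
  have h12 : Integrable (fun x => ‖x‖ ^ 2 - 2 * ⟪x, m⟫) μ := hsq.sub h2
  simp_rw [norm_sub_sq_real]
  rw [integral_add h12 (integrable_const _), integral_sub hsq h2, integral_const_mul, hinner,
    integral_const, probReal_univ, one_smul]
  ring

end Centering

section Posterior

variable {d : ℕ}

local notation "E" => EuclideanSpace ℝ (Fin d)

noncomputable def posterior (pX : Measure E) (ω : ℝ) (y : E) : Measure E :=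
  pX.tilted fun x => -‖x - y‖ ^ 2 / (2 * ω ^ 2)

theorem wgt_pos (ω : ℝ) (y x : E) : 0 < wgt ω y x :=
  exp_pos _

@[fun_prop]
theorem continuous_wgt (ω : ℝ) (y : E) : Continuous (wgt ω y) := by
  unfold wgt; fun_prop

theorem wgt_le_one (ω : ℝ) (y x : E) : wgt ω y x ≤ 1 :=
  exp_le_one_iff.2 (div_nonpos_of_nonpos_of_nonneg (by simp) (by positivity))

theorem integrable_wgt (pX : Measure E) [IsFiniteMeasure pX] (ω : ℝ) (y : E) :
    Integrable (wgt ω y) pX :=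
  .of_bound (continuous_wgt ω y).aestronglyMeasurable 1 <| .of_forall fun x => by
    rw [norm_of_nonneg (wgt_pos ω y x).le]
    exact wgt_le_one ω y x

theorem postZ_pos (pX : Measure E) [IsFiniteMeasure pX] [NeZero pX] (ω : ℝ) (y : E) :
    0 < postZ pX ω y :=
  integral_exp_pos (integrable_wgt pX ω y)

instance (pX : Measure E) (ω : ℝ) (y : E) : IsZeroOrProbabilityMeasure (posterior pX ω y) :=
  isZeroOrProbabilityMeasure_tilted

instance (pX : Measure E) [IsFiniteMeasure pX] [NeZero pX] (ω : ℝ) (y : E) :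
    IsProbabilityMeasure (posterior pX ω y) :=
  isProbabilityMeasure_tilted (integrable_wgt pX ω y)

theorem integral_posterior {F : Type*} [NormedAddCommGroup F] [NormedSpace ℝ F]
    (pX : Measure E) (ω : ℝ) (y : E) (g : E → F) :
    ∫ x, g x ∂posterior pX ω y = (postZ pX ω y)⁻¹ • ∫ x, wgt ω y x • g x ∂pX := by
  rw [posterior, integral_tilted, ← integral_smul]
  congr 1 with x
  rw [div_eq_inv_mul, mul_smul]
  rfl

theorem postMean_eq_integral (pX : Measure E) (ω : ℝ) (y : E) :
    postMean pX ω y = ∫ x, x ∂posterior pX ω y :=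
  (integral_posterior pX ω y id).symm

theorem integral_wgt_smul {F : Type*} [NormedAddCommGroup F] [NormedSpace ℝ F]
    (pX : Measure E) [IsFiniteMeasure pX] [NeZero pX] (ω : ℝ) (y : E) (g : E → F) :
    ∫ x, wgt ω y x • g x ∂pX = postZ pX ω y • ∫ x, g x ∂posterior pX ω y := by
  rw [integral_posterior, smul_inv_smul₀ (postZ_pos pX ω y).ne']

theorem posterior_compl_eq_zero {pX : Measure E} {K : Set E} (hK0 : pX Kᶜ = 0) (ω : ℝ) (y : E) :
    posterior pX ω y Kᶜ = 0 :=
  tilted_absolutelyContinuous pX _ hK0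

theorem postTrCov_eq_integral (pX : Measure E) (ω : ℝ) (y : E) :
    postTrCov pX ω y = ∫ x, ‖x - postMean pX ω y‖ ^ 2 ∂posterior pX ω y :=
  (integral_posterior pX ω y _).symm

theorem postCovApply_eq_integral (pX : Measure E) (ω : ℝ) (y v : E) :
    postCovApply pX ω y v
      = ∫ x, ⟪x - postMean pX ω y, v⟫ • (x - postMean pX ω y) ∂posterior pX ω y := by
  simp_rw [integral_posterior, smul_smul]
  rfl

theorem postCrossCov_eq_integral (pX : Measure E) (ω : ℝ) (y : E) :
    postCrossCov pX ω y = ∫ x, ‖x - y‖ ^ 2 • x ∂posterior pX ω y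
      - (∫ x, ‖x - y‖ ^ 2 ∂posterior pX ω y) • postMean pX ω y := by
  simp_rw [integral_posterior, smul_smul]
  rfl

theorem hasFDerivAt_wgt (ω : ℝ) (x y : E) :
    HasFDerivAt (fun z => wgt ω z x) (((ω ^ 2)⁻¹ * wgt ω y x) • innerSL ℝ (x - y)) y := by
  have h : HasFDerivAt (fun z : E => -‖x - z‖ ^ 2 / (2 * ω ^ 2))
      ((ω ^ 2)⁻¹ • innerSL ℝ (x - y)) y := by
    refine (((hasFDerivAt_id y).const_sub x).norm_sq.neg.mul_const (2 * ω ^ 2)⁻¹).congr_fderiv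
      (ContinuousLinearMap.ext fun v => ?_)
    simp only [mul_inv_rev, id_eq, map_sub, ContinuousLinearMap.comp_neg,
      ContinuousLinearMap.comp_id, neg_sub, smul_neg, neg_apply, smul_apply, sub_apply,
      coe_innerSL_apply, nsmul_eq_mul, Nat.cast_ofNat, smul_eq_mul]
    ring
  refine h.exp.congr_fderiv (ContinuousLinearMap.ext fun v => ?_)
  simp only [map_sub, smul_apply, sub_apply, coe_innerSL_apply, smul_eq_mul, wgt]
  ring

section Derivative

variable {F : Type*} [NormedAddCommGroup F] [NormedSpace ℝ F]
  {pX : Measure (EuclideanSpace ℝ (Fin d))}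
  {K : Set (EuclideanSpace ℝ (Fin d))} (hK : IsCompact K) (hK0 : pX Kᶜ = 0)
include hK hK0

theorem hasFDerivAt_integral_wgt_smul [IsFiniteMeasure pX] (ω : ℝ) {g : E → F}
    (hg : Continuous g) (y : E) :
    HasFDerivAt (fun z => ∫ x, wgt ω z x • g x ∂pX)
      ((ω ^ 2)⁻¹ • ∫ x, wgt ω y x • (innerSL ℝ (x - y)).smulRight (g x) ∂pX) y := by
  have hbound : ∀ x, ∀ z ∈ Metric.ball y 1,
      ‖(ω ^ 2)⁻¹ • wgt ω z x • (innerSL ℝ (x - z)).smulRight (g x)‖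
        ≤ (ω ^ 2)⁻¹ * (‖x - y‖ + 1) * ‖g x‖ := by
    intro x z hz
    have hyz : ‖y - z‖ ≤ 1 := by
      rw [← dist_eq_norm, dist_comm]
      exact (Metric.mem_ball.1 hz).le
    calc ‖(ω ^ 2)⁻¹ • wgt ω z x • (innerSL ℝ (x - z)).smulRight (g x)‖
        = (ω ^ 2)⁻¹ * wgt ω z x * ‖x - z‖ * ‖g x‖ := by
          rw [norm_smul, norm_smul, ContinuousLinearMap.norm_smulRight_apply, innerSL_apply_norm,
            norm_of_nonneg (by positivity), norm_of_nonneg (wgt_pos ω z x).le]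
          ring
      _ ≤ (ω ^ 2)⁻¹ * 1 * (‖x - y‖ + ‖y - z‖) * ‖g x‖ := by
          gcongr
          · exact wgt_le_one ω z x
          · exact norm_sub_le_norm_sub_add_norm_sub x y z
      _ ≤ (ω ^ 2)⁻¹ * (‖x - y‖ + 1) * ‖g x‖ := by gcongr; linarith
  rw [← integral_smul]
  refine hasFDerivAt_integral_of_dominated_of_fderiv_le (Metric.ball_mem_nhds y one_pos)
    (.of_forall fun z => ((continuous_wgt ω z).smul hg).aestronglyMeasurable)
    (((continuous_wgt ω y).smul hg).integrable_of_measure_compl_eq_zero hK hK0)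
    (Continuous.integrable_of_measure_compl_eq_zero hK hK0
      (by fun_prop)).aestronglyMeasurable (.of_forall hbound)
    (Continuous.integrable_of_measure_compl_eq_zero hK hK0 (by fun_prop))
    (.of_forall fun x z _ => ((hasFDerivAt_wgt ω x z).smul_const (g x)).congr_fderiv ?_)
  ext v
  simp [smul_smul]

theorem integrable_posterior {G : Type*} [NormedAddCommGroup G] (ω : ℝ) (y : E) {f : E → G}
    (hf : Continuous f) : Integrable f (posterior pX ω y) :=
  hf.integrable_of_measure_compl_eq_zero hK (posterior_compl_eq_zero hK0 ω y)

theorem hasFDerivAt_integral_posterior [IsFiniteMeasure pX] [NeZero pX] (ω : ℝ) {g : E → F}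
    (hg : Continuous g) (y : E) :
    HasFDerivAt (fun z => ∫ x, g x ∂posterior pX ω z)
      ((ω ^ 2)⁻¹ • ∫ x, (innerSL ℝ (x - postMean pX ω y)).smulRight (g x) ∂posterior pX ω y)
      y := by
  have hdZ := hasFDerivAt_integral_wgt_smul hK hK0 ω (g := fun _ => (1 : ℝ)) continuous_const y
  simp only [smul_eq_mul, mul_one] at hdZ
  have hA := ((hasDerivAt_inv (postZ_pos pX ω y).ne').comp_hasFDerivAt y hdZ).smul
    (hasFDerivAt_integral_wgt_smul hK hK0 ω hg y)
  refine (hA.congr_of_eventuallyEq (.of_forall fun z => integral_posterior pX ω z g)).congr_fderiv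
    (ContinuousLinearMap.ext fun v => ?_)
  set q := posterior pX ω y
  set m := postMean pX ω y
  have hmean : ∫ x, ⟪x - y, v⟫ ∂q = ⟪m - y, v⟫ := by
    simp_rw [inner_sub_left]
    rw [integral_sub (integrable_posterior hK hK0 ω y (by fun_prop)) (integrable_const _),
      integral_const, probReal_univ, one_smul]
    simp_rw [real_inner_comm v]
    rw [integral_inner (integrable_posterior hK hK0 ω y continuous_id'), ← postMean_eq_integral]
  have hcenter : ∫ x, ⟪x - m, v⟫ • g x ∂q
      = ∫ x, ⟪x - y, v⟫ • g x ∂q - ⟪m - y, v⟫ • ∫ x, g x ∂q := by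
    rw [← integral_smul, ← integral_sub ?i1 ?i2]
    · congr with x
      rw [← sub_smul, ← inner_sub_left, sub_sub_sub_cancel_right]
    all_goals exact integrable_posterior hK hK0 ω y (by fun_prop)
  have hZ : postZ pX ω y ≠ 0 := (postZ_pos pX ω y).ne'
  rw [integral_wgt_smul, integral_wgt_smul, integral_wgt_smul]
  simp only [add_apply, smul_apply, ContinuousLinearMap.smulRight_apply, Function.comp_apply]
  rw [ContinuousLinearMap.integral_apply ?c1, ContinuousLinearMap.integral_apply ?c2,
    ContinuousLinearMap.integral_apply ?c3]
  · simp only [ContinuousLinearMap.smulRight_apply, innerSL_apply_apply, smul_eq_mul, mul_one]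
    rw [hmean, hcenter]
    match_scalars <;> field_simp
  all_goals exact integrable_posterior hK hK0 ω y (by fun_prop)

theorem hasFDerivAt_postTrCov [IsFiniteMeasure pX] [NeZero pX] (ω : ℝ) (y : E) :
    HasFDerivAt (postTrCov pX ω)
      ((ω ^ 2)⁻¹ • ∫ x, (innerSL ℝ (x - postMean pX ω y)).smulRight (‖x‖ ^ 2) ∂posterior pX ω y
        - 2 • (innerSL ℝ (postMean pX ω y)).comp ((ω ^ 2)⁻¹ •
          ∫ x, (innerSL ℝ (x - postMean pX ω y)).smulRight x ∂posterior pX ω y)) y := by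
  have hmean := hasFDerivAt_integral_posterior hK hK0 ω continuous_id' y
  have hsq := hasFDerivAt_integral_posterior hK hK0 ω (g := fun x => ‖x‖ ^ 2) (by fun_prop) y
  have htr := (hsq.sub hmean.norm_sq).congr_of_eventuallyEq (f₁ := postTrCov pX ω)
    (.of_forall fun z => by
      rw [postTrCov_eq_integral, postMean_eq_integral, integral_norm_sub_integral_id_sq
        (integrable_posterior hK hK0 ω z continuous_id')
        (integrable_posterior hK hK0 ω z (by fun_prop))]
      rfl)
  rwa [← postMean_eq_integral] at htr

theorem hasGradientAt_postTrCov [IsFiniteMeasure pX] [NeZero pX] (ω : ℝ) (y : E) :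
    HasGradientAt (postTrCov pX ω) ((ω ^ 2)⁻¹ • ∫ x, ‖x - postMean pX ω y‖ ^ 2 •
      (x - postMean pX ω y) ∂posterior pX ω y) y := by
  rw [hasGradientAt_iff_hasFDerivAt]
  refine (hasFDerivAt_postTrCov hK hK0 ω y).congr_fderiv (ContinuousLinearMap.ext fun v => ?_)
  set q := posterior pX ω y
  set m := postMean pX ω y
  have hcenter : ∫ x, ‖x - m‖ ^ 2 • (x - m) ∂q = ∫ x, (‖x‖ ^ 2 - 2 * ⟪x, m⟫) • (x - m) ∂q := by
    rw [← integral_add_const_smul_sub_of_integral_eq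
      (integrable_posterior hK hK0 ω y continuous_id') (postMean_eq_integral pX ω y).symm
      (μ := q) (m := m) (g := fun x => ‖x‖ ^ 2 - 2 * ⟪x, m⟫)
      (integrable_posterior hK hK0 ω y (by fun_prop))
      (‖m‖ ^ 2)]
    simp_rw [norm_sub_sq_real]
  have hsplit : ∫ x, ⟪v, (‖x‖ ^ 2 - 2 * ⟪x, m⟫) • (x - m)⟫ ∂q
      = ∫ x, ⟪x - m, v⟫ * ‖x‖ ^ 2 ∂q - 2 * ∫ x, ⟪m, ⟪x - m, v⟫ • x⟫ ∂q := by
    rw [← integral_const_mul, ← integral_sub ?i1 ?i2]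
    · congr with x
      rw [real_inner_smul_right, real_inner_smul_right, real_inner_comm v, real_inner_comm x]
      ring
    all_goals exact integrable_posterior hK hK0 ω y (by fun_prop)
  simp only [sub_apply, smul_apply, ContinuousLinearMap.comp_apply, innerSL_apply_apply,
    InnerProductSpace.toDual_apply_apply]
  rw [ContinuousLinearMap.integral_apply (integrable_posterior hK hK0 ω y (by fun_prop)),
    ContinuousLinearMap.integral_apply (integrable_posterior hK hK0 ω y (by fun_prop)), hcenter,
    real_inner_comm v]
  simp only [real_inner_smul_right, ContinuousLinearMap.smulRight_apply, innerSL_apply_apply,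
    smul_eq_mul, nsmul_eq_mul]
  rw [← integral_inner (integrable_posterior hK hK0 ω y (by fun_prop)),
    ← integral_inner (integrable_posterior hK hK0 ω y (by fun_prop)), hsplit]
  ring

theorem postCrossCov_sub_two_smul_postCovApply [IsFiniteMeasure pX] [NeZero pX] (ω : ℝ)
    (y : E) :
    postCrossCov pX ω y - 2 • postCovApply pX ω y (postMean pX ω y - y)
      = ∫ x, ‖x - postMean pX ω y‖ ^ 2 • (x - postMean pX ω y) ∂posterior pX ω y := by
  rw [postCrossCov_eq_integral, postCovApply_eq_integral, ← integral_smul_const,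
    ← integral_sub ?i1 ?i2, ← Nat.cast_smul_eq_nsmul ℝ, ← integral_smul, ← integral_sub ?i3 ?i4]
  · rw [← integral_add_const_smul_sub_of_integral_eq
      (integrable_posterior hK hK0 ω y continuous_id') (postMean_eq_integral pX ω y).symm
      (g := fun x => ‖x - postMean pX ω y‖ ^ 2) (integrable_posterior hK hK0 ω y (by fun_prop))
      (‖postMean pX ω y - y‖ ^ 2)]
    refine integral_congr_ae (.of_forall fun x => ?_)
    dsimp only
    rw [← smul_sub, smul_smul, ← sub_smul, ← sub_add_sub_cancel x (postMean pX ω y) y,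
      norm_add_sq_real]
    congr 1
    push_cast
    ring
  all_goals exact integrable_posterior hK hK0 ω y (by fun_prop)

end Derivative

end Posterior

/-- Gradient of the trace of the posterior covariance:
`ω² ∇_y tr C_ω(y) = W_ω(y) - 2 C_ω(y)(f⋆_ω(y) - y)`. -/
theorem stmt19 {d : ℕ} (pX : Measure (EuclideanSpace ℝ (Fin d)))
    [IsProbabilityMeasure pX]
    (hsupp : ∃ K : Set (EuclideanSpace ℝ (Fin d)), IsCompact K ∧ pX Kᶜ = 0)
    (ω : ℝ) (hω : 0 < ω) :
    ∀ y : EuclideanSpace ℝ (Fin d),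
      ω ^ 2 • gradient (fun z => postTrCov pX ω z) y
        = postCrossCov pX ω y - 2 • postCovApply pX ω y (postMean pX ω y - y) := by
  obtain ⟨K, hK, hK0⟩ := hsupp
  intro y
  rw [(hasGradientAt_postTrCov hK hK0 ω y).gradient, smul_smul,
    mul_inv_cancel₀ (pow_ne_zero 2 hω.ne'), one_smul,
    postCrossCov_sub_two_smul_postCovApply hK hK0 ω y]
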